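/- arXiv:1910.03296 — 6 statements merged into one kernel-verified Lean document; each statement's English description precedes it below -/
import Mathlib

section
/- Let n ≥ 1, let U ⊆ ℝⁿ be open and convex, let f : ℝⁿ → ℝⁿ be continuously differentiable on U with Jacobian J_f, let xₙ ∈ U, and let A : ℝⁿ → ℝⁿ be an invertible linear map (playing the role of M(xₙ)). Assume: (A1) there is ω > 0 such that for every v ∈ U and every t ∈ [0,1], writing z = t·xₙ + (1−t)·v, one has ‖A⁻¹ (J_f(xₙ) − J_f(z)) (xₙ − v)‖ ≤ ω (1−t) ‖xₙ − v‖²; (A2) there is κ ∈ [0,1) with ‖Id − A⁻¹ J_f(xₙ)‖ ≤ κ; (A3) setting αₙ = ‖A⁻¹ f(xₙ)‖, one has ω αₙ ≤ (1−κ)²/2; (A4) the closed ball of radius R = (1−κ)/ω + √((1−κ)²/ω² − 2αₙ/ω) centered at xₙ is contained in U. Then the map g(v) = v − A⁻¹ f(v) maps the closed ball B_R(xₙ) into itself. -/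
/-!
With `h = A⁻¹ ∘ f`, `K = A⁻¹ J_f(xₙ)` and `r = ‖xₙ - v‖`, the image of `v` under the simplified
Newton map satisfies
`g v - xₙ = (h xₙ - h v - K (xₙ - v)) - (Id - K)(xₙ - v) - h xₙ`.
Integrating (A1) along the segment from `v` to `xₙ` bounds the first term by `ω r² / 2`, (A2) bounds
the second by `κ r`, and the third has norm `αₙ`. Hence `‖g v - xₙ‖ ≤ φ r` for the increasing
majorant `φ r = ω r² / 2 + κ r + αₙ`; (A3) makes `R` a real root of `φ R = R`, so `r ≤ R` gives
`‖g v - xₙ‖ ≤ φ R = R`.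
-/

open Set

noncomputable section

def newtonMajorant (ω κ α r : ℝ) : ℝ := ω * r ^ 2 / 2 + κ * r + α

def newtonRadius (ω κ α : ℝ) : ℝ := (1 - κ) / ω + √((1 - κ) ^ 2 / ω ^ 2 - 2 * α / ω)

end

theorem newtonMajorant_le_newtonMajorant {ω κ α r s : ℝ} (hω : 0 ≤ ω) (hκ : 0 ≤ κ)
    (hr : 0 ≤ r) (hrs : r ≤ s) : newtonMajorant ω κ α r ≤ newtonMajorant ω κ α s := by
  unfold newtonMajorant
  gcongr

theorem isFixedPt_newtonMajorant_newtonRadius {ω κ α : ℝ} (hω : 0 < ω)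
    (hα : ω * α ≤ (1 - κ) ^ 2 / 2) :
    Function.IsFixedPt (newtonMajorant ω κ α) (newtonRadius ω κ α) := by
  have hdisc : 0 ≤ (1 - κ) ^ 2 / ω ^ 2 - 2 * α / ω := by
    rw [sub_nonneg, div_le_div_iff₀ hω (by positivity)]
    nlinarith
  have hsq := Real.sq_sqrt hdisc
  unfold Function.IsFixedPt newtonMajorant newtonRadius
  set s := √((1 - κ) ^ 2 / ω ^ 2 - 2 * α / ω)
  field_simp at hsq ⊢
  linear_combination hsq

section NormedSpace

variable {E F : Type*} [NormedAddCommGroup E] [NormedSpace ℝ E]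
  [NormedAddCommGroup F] [NormedSpace ℝ F]

theorem norm_sub_sub_apply_le_of_segment {f : E → F} {J : E → E →L[ℝ] F} {x v : E} {C : ℝ}
    (hf : ∀ t ∈ Icc (0 : ℝ) 1,
      HasFDerivAt f (J (t • x + (1 - t) • v)) (t • x + (1 - t) • v))
    (hJ : ∀ t ∈ Icc (0 : ℝ) 1, ‖(J x - J (t • x + (1 - t) • v)) (x - v)‖ ≤ C * (1 - t)) :
    ‖f x - f v - J x (x - v)‖ ≤ C / 2 := by
  set p : ℝ → E := fun t => t • x + (1 - t) • v
  have hp : ∀ t, HasDerivAt p (x - v) t := fun t =>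
    (((hasDerivAt_id t).smul_const x).add
      (((hasDerivAt_const t 1).sub (hasDerivAt_id t)).smul_const v)).congr_deriv
      (by simp [sub_eq_add_neg])
  set ψ : ℝ → F := fun t => f (p t) - f v - t • J x (x - v)
  have hψ : ∀ t ∈ Icc (0 : ℝ) 1, HasDerivAt ψ (J (p t) (x - v) - J x (x - v)) t := fun t ht =>
    (((hf t ht).comp_hasDerivAt t (hp t)).sub_const (f v)
      |>.sub ((hasDerivAt_id t).smul_const (J x (x - v)))).congr_deriv (by rw [one_smul])
  have hbound : ∀ t, HasDerivAt (fun t : ℝ => C * (t - t ^ 2 / 2)) (C * (1 - t)) t := fun t =>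
    (((hasDerivAt_id t).sub ((hasDerivAt_pow 2 t).div_const 2)).const_mul C).congr_deriv
      (by simp)
  have hψ1 : ‖ψ 1‖ ≤ C * (1 - 1 ^ 2 / 2) :=
    image_norm_le_of_norm_deriv_right_le_deriv_boundary
      (fun t ht => (hψ t ht).continuousAt.continuousWithinAt)
      (fun t ht => (hψ t (Ico_subset_Icc_self ht)).hasDerivWithinAt)
      (by simp [ψ, p]) hbound
      (fun t ht => by
        rw [norm_sub_rev, ← sub_apply]
        exact hJ t (Ico_subset_Icc_self ht))
      (right_mem_Icc.mpr zero_le_one)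
  have hψ1' : ψ 1 = f x - f v - J x (x - v) := by simp [ψ, p]
  rw [← hψ1']
  linarith

theorem norm_sub_sub_le_newtonMajorant {h : E → E} {K : E →L[ℝ] E} {x v : E} {ω κ : ℝ}
    (hrem : ‖h x - h v - K (x - v)‖ ≤ ω * ‖x - v‖ ^ 2 / 2)
    (hK : ‖ContinuousLinearMap.id ℝ E - K‖ ≤ κ) :
    ‖v - h v - x‖ ≤ newtonMajorant ω κ ‖h x‖ ‖x - v‖ := by
  have hsplit : v - h v - x
      = (h x - h v - K (x - v)) - (ContinuousLinearMap.id ℝ E - K) (x - v) - h x := by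
    simp only [sub_apply, ContinuousLinearMap.id_apply]
    abel
  have hlin : ‖(ContinuousLinearMap.id ℝ E - K) (x - v)‖ ≤ κ * ‖x - v‖ :=
    ((ContinuousLinearMap.id ℝ E - K).le_opNorm _).trans
      (mul_le_mul_of_nonneg_right hK (norm_nonneg _))
  calc ‖v - h v - x‖
      ≤ ‖h x - h v - K (x - v)‖ + ‖(ContinuousLinearMap.id ℝ E - K) (x - v)‖ + ‖h x‖ := by
        rw [hsplit]
        exact (norm_sub_le _ _).trans (add_le_add_left (norm_sub_le _ _) _)
    _ ≤ newtonMajorant ω κ ‖h x‖ ‖x - v‖ := by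
        unfold newtonMajorant; gcongr

end NormedSpace

theorem simplified_newton_maps_ball_into_itself_general
    {n : ℕ}
    (U : Set (EuclideanSpace ℝ (Fin n)))
    (f : EuclideanSpace ℝ (Fin n) → EuclideanSpace ℝ (Fin n))
    (J : EuclideanSpace ℝ (Fin n) →
      (EuclideanSpace ℝ (Fin n) →L[ℝ] EuclideanSpace ℝ (Fin n)))
    (hf : ∀ x ∈ U, HasFDerivAt f (J x) x)
    (xn : EuclideanSpace ℝ (Fin n))
    (A : EuclideanSpace ℝ (Fin n) ≃L[ℝ] EuclideanSpace ℝ (Fin n))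
    (ω κ : ℝ) (hω : 0 < ω) (hκ0 : 0 ≤ κ)
    (hA1 : ∀ v ∈ U, ∀ t ∈ Set.Icc (0:ℝ) 1,
      ‖A.symm ((J xn - J (t • xn + (1 - t) • v)) (xn - v))‖
        ≤ ω * (1 - t) * ‖xn - v‖ ^ 2)
    (hA2 : ‖ContinuousLinearMap.id ℝ (EuclideanSpace ℝ (Fin n))
        - (A.symm : EuclideanSpace ℝ (Fin n) →L[ℝ] EuclideanSpace ℝ (Fin n)).comp (J xn)‖
        ≤ κ)
    (α : ℝ) (hα : α = ‖A.symm (f xn)‖)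
    (hA3 : ω * α ≤ (1 - κ) ^ 2 / 2)
    (R : ℝ) (hR : R = (1 - κ) / ω + Real.sqrt ((1 - κ) ^ 2 / ω ^ 2 - 2 * α / ω))
    (hA4 : Metric.closedBall xn R ⊆ U) :
    Set.MapsTo (fun v => v - A.symm (f v))
      (Metric.closedBall xn R) (Metric.closedBall xn R) := by
  intro v hv
  have hcenter : xn ∈ Metric.closedBall xn R := Metric.mem_closedBall_self (dist_nonneg.trans hv)
  have hseg : ∀ t ∈ Icc (0 : ℝ) 1, t • xn + (1 - t) • v ∈ U := fun t ht =>
    hA4 (convex_closedBall xn R hcenter hv ht.1 (by linarith [ht.2]) (by ring))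
  have hrem := norm_sub_sub_apply_le_of_segment (f := fun y => A.symm (f y))
    (J := fun y => (A.symm : _ →L[ℝ] _).comp (J y)) (C := ω * ‖xn - v‖ ^ 2)
    (fun t ht => A.symm.hasFDerivAt.comp _ (hf _ (hseg t ht)))
    (fun t ht => by
      rw [← ContinuousLinearMap.comp_sub, ContinuousLinearMap.comp_apply,
        ContinuousLinearEquiv.coe_coe, mul_right_comm]
      exact hA1 v (hA4 hv) t ht)
  have hr : ‖xn - v‖ ≤ R := by rw [norm_sub_rev, ← dist_eq_norm]; exact hv
  have hfix : newtonMajorant ω κ α R = R := by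
    rw [hR]; exact isFixedPt_newtonMajorant_newtonRadius hω hA3
  rw [Metric.mem_closedBall, dist_eq_norm]
  calc ‖v - A.symm (f v) - xn‖ ≤ newtonMajorant ω κ α ‖xn - v‖ := by
        rw [hα]
        exact norm_sub_sub_le_newtonMajorant (h := fun y => A.symm (f y)) hrem hA2
    _ ≤ newtonMajorant ω κ α R := newtonMajorant_le_newtonMajorant hω.le hκ0 (norm_nonneg _) hr
    _ = R := hfix

/-- **Theorem 1** (ball invariance of the simplified Newton map).
If the affine covariant Lipschitz condition (A1), the approximation condition (A2),
the smallness condition (A3) and the ball condition (A4) hold at the iterate `xn`,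
then `g v = v - A⁻¹ (f v)` maps the closed ball of radius
`R = (1-κ)/ω + √((1-κ)²/ω² - 2αₙ/ω)` around `xn` into itself. -/
theorem simplified_newton_maps_ball_into_itself
    {n : ℕ} (hn : 1 ≤ n)
    (U : Set (EuclideanSpace ℝ (Fin n))) (hUopen : IsOpen U) (hUconv : Convex ℝ U)
    (f : EuclideanSpace ℝ (Fin n) → EuclideanSpace ℝ (Fin n))
    (J : EuclideanSpace ℝ (Fin n) →
      (EuclideanSpace ℝ (Fin n) →L[ℝ] EuclideanSpace ℝ (Fin n)))
    (hf : ∀ x ∈ U, HasFDerivAt f (J x) x)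
    (hJcont : ContinuousOn J U)
    (xn : EuclideanSpace ℝ (Fin n)) (hxn : xn ∈ U)
    (A : EuclideanSpace ℝ (Fin n) ≃L[ℝ] EuclideanSpace ℝ (Fin n))
    (ω κ : ℝ) (hω : 0 < ω) (hκ0 : 0 ≤ κ) (hκ1 : κ < 1)
    (hA1 : ∀ v ∈ U, ∀ t ∈ Set.Icc (0:ℝ) 1,
      ‖A.symm ((J xn - J (t • xn + (1 - t) • v)) (xn - v))‖
        ≤ ω * (1 - t) * ‖xn - v‖ ^ 2)
    (hA2 : ‖ContinuousLinearMap.id ℝ (EuclideanSpace ℝ (Fin n))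
        - (A.symm : EuclideanSpace ℝ (Fin n) →L[ℝ] EuclideanSpace ℝ (Fin n)).comp (J xn)‖
        ≤ κ)
    (α : ℝ) (hα : α = ‖A.symm (f xn)‖)
    (hA3 : ω * α ≤ (1 - κ) ^ 2 / 2)
    (R : ℝ) (hR : R = (1 - κ) / ω + Real.sqrt ((1 - κ) ^ 2 / ω ^ 2 - 2 * α / ω))
    (hA4 : Metric.closedBall xn R ⊆ U) :
    Set.MapsTo (fun v => v - A.symm (f v))
      (Metric.closedBall xn R) (Metric.closedBall xn R) :=
  simplified_newton_maps_ball_into_itself_general U f J hf xn A ω κ hω hκ0 hA1 hA2 α hα hA3 R hR hA4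
end

section
/- Let n ≥ 1, let U ⊆ ℝⁿ be open and convex, let f : ℝⁿ → ℝⁿ be continuously differentiable on U with Jacobian J_f, let xₙ ∈ U, let A : ℝⁿ → ℝⁿ be an invertible linear map, and let v ∈ U. Assume: (A1) there is ω > 0 such that for every t ∈ [0,1], writing z = t·xₙ + (1−t)·v, one has ‖A⁻¹ (J_f(xₙ) − J_f(z)) (xₙ − v)‖ ≤ ω (1−t) ‖xₙ − v‖²; and (A2) there is κ ∈ [0,1) with ‖Id − A⁻¹ J_f(xₙ)‖ ≤ κ. Then ‖(xₙ − v) − A⁻¹ (f(xₙ) − f(v))‖ ≤ (κ + (ω/2) ‖xₙ − v‖) · ‖xₙ − v‖. -/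
/-!
Write `d = x - y` and `z t = t • x + (1 - t) • y`. The curve `g t = t • d - L (f (z t))` has
`g 1 - g 0 = d - L (f x - f y)` and derivative
`d - L (J (z t) d) = (id - L ∘ J x) d + L ((J x - J (z t)) d)`, of norm at most
`κ ‖d‖ + ω (1 - t) ‖d‖²`. The mean value inequality against the antiderivative of this bound
gives `‖g 1 - g 0‖ ≤ κ ‖d‖ + (ω / 2) ‖d‖²`.
-/

open Set

theorem norm_image_sub_le_of_norm_deriv_le_affine_01 {E : Type*} [NormedAddCommGroup E]
    [NormedSpace ℝ E] {g g' : ℝ → E} {a b : ℝ} (hg : ∀ t ∈ Icc (0 : ℝ) 1, HasDerivAt g (g' t) t)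
    (bound : ∀ t ∈ Icc (0 : ℝ) 1, ‖g' t‖ ≤ a + b * (1 - t)) :
    ‖g 1 - g 0‖ ≤ a + b / 2 := by
  have hB (t : ℝ) : HasDerivAt (fun t => a * t + b * (t - t ^ 2 / 2)) (a + b * (1 - t)) t :=
    (((hasDerivAt_id' t).const_mul a).add
      (((hasDerivAt_id' t).sub ((hasDerivAt_pow 2 t).div_const 2)).const_mul b)).congr_deriv
      (by norm_num)
  have key := image_norm_le_of_norm_deriv_right_le_deriv_boundary (a := 0) (b := 1)
    (f := fun t => g t - g 0) (f' := g')
    (fun t ht => ((hg t ht).sub_const (g 0)).continuousAt.continuousWithinAt)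
    (fun t ht => ((hg t (Ico_subset_Icc_self ht)).sub_const (g 0)).hasDerivWithinAt)
    (by simp) hB (fun t ht => bound t (Ico_subset_Icc_self ht)) (right_mem_Icc.2 zero_le_one)
  convert key using 1
  ring

theorem Convex.hasDerivAt_comp_segment {E F : Type*} [NormedAddCommGroup E] [NormedSpace ℝ E]
    [NormedAddCommGroup F] [NormedSpace ℝ F] {U : Set E} (hU : Convex ℝ U) {f : E → F}
    {J : E → E →L[ℝ] F} (hf : ∀ x ∈ U, HasFDerivAt f (J x) x) {x y : E} (hx : x ∈ U) (hy : y ∈ U)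
    {t : ℝ} (ht : t ∈ Icc (0 : ℝ) 1) :
    HasDerivAt (fun s : ℝ => f (s • x + (1 - s) • y)) (J (t • x + (1 - t) • y) (x - y)) t := by
  have hseg : HasDerivAt (fun s : ℝ => s • x + (1 - s) • y) (x - y) t :=
    (((hasDerivAt_id' t).smul_const x).add
      (((hasDerivAt_id' t).const_sub 1).smul_const y)).congr_deriv (by module)
  exact (hf _ (hU hx hy ht.1 (by linarith [ht.2]) (by ring))).comp_hasDerivAt t hseg

theorem Convex.norm_sub_sub_apply_image_sub_le {E F : Type*} [NormedAddCommGroup E]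
    [NormedSpace ℝ E] [NormedAddCommGroup F] [NormedSpace ℝ F] {U : Set E} (hU : Convex ℝ U)
    {f : E → F} {J : E → E →L[ℝ] F} (hf : ∀ x ∈ U, HasFDerivAt f (J x) x) {x y : E}
    (hx : x ∈ U) (hy : y ∈ U) (L : F →L[ℝ] E) {ω κ : ℝ}
    (hLip : ∀ t ∈ Icc (0 : ℝ) 1,
      ‖L ((J x - J (t • x + (1 - t) • y)) (x - y))‖ ≤ ω * (1 - t) * ‖x - y‖ ^ 2)
    (hApprox : ‖ContinuousLinearMap.id ℝ E - L.comp (J x)‖ ≤ κ) :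
    ‖(x - y) - L (f x - f y)‖ ≤ (κ + ω / 2 * ‖x - y‖) * ‖x - y‖ := by
  set d := x - y
  set z : ℝ → E := fun t => t • x + (1 - t) • y
  have hderiv : ∀ t ∈ Icc (0 : ℝ) 1,
      HasDerivAt (fun s : ℝ => s • d - L (f (z s))) (d - L (J (z t) d)) t := fun t ht =>
    (((hasDerivAt_id' t).smul_const d).sub
      (L.hasFDerivAt.comp_hasDerivAt t (hU.hasDerivAt_comp_segment hf hx hy ht))).congr_deriv
      (by rw [one_smul])
  have hbound : ∀ t ∈ Icc (0 : ℝ) 1,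
      ‖d - L (J (z t) d)‖ ≤ κ * ‖d‖ + ω * ‖d‖ ^ 2 * (1 - t) := fun t ht => by
    have hsplit : d - L (J (z t) d)
        = (ContinuousLinearMap.id ℝ E - L.comp (J x)) d + L ((J x - J (z t)) d) := by
      simp only [sub_apply, ContinuousLinearMap.id_apply, ContinuousLinearMap.comp_apply, map_sub]
      abel
    calc _ ≤ ‖ContinuousLinearMap.id ℝ E - L.comp (J x)‖ * ‖d‖ + ‖L ((J x - J (z t)) d)‖ := by
          rw [hsplit]
          exact (norm_add_le _ _).trans (by gcongr; exact ContinuousLinearMap.le_opNorm _ _)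
      _ ≤ κ * ‖d‖ + ω * ‖d‖ ^ 2 * (1 - t) :=
          add_le_add (mul_le_mul_of_nonneg_right hApprox (norm_nonneg _))
            (by linarith [hLip t ht])
  have hz0 : z 0 = y := by simp [z]
  have hz1 : z 1 = x := by simp [z]
  have key := norm_image_sub_le_of_norm_deriv_le_affine_01 hderiv hbound
  rw [hz0, hz1, one_smul, zero_smul, zero_sub, sub_neg_eq_add] at key
  rw [map_sub, ← sub_add]
  exact key.trans_eq (by ring)

theorem newton_increment_estimate_general
    {n : ℕ}
    (U : Set (EuclideanSpace ℝ (Fin n))) (hUconv : Convex ℝ U)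
    (f : EuclideanSpace ℝ (Fin n) → EuclideanSpace ℝ (Fin n))
    (J : EuclideanSpace ℝ (Fin n) →
      (EuclideanSpace ℝ (Fin n) →L[ℝ] EuclideanSpace ℝ (Fin n)))
    (hf : ∀ x ∈ U, HasFDerivAt f (J x) x)
    (xn : EuclideanSpace ℝ (Fin n)) (hxn : xn ∈ U)
    (A : EuclideanSpace ℝ (Fin n) ≃L[ℝ] EuclideanSpace ℝ (Fin n))
    (v : EuclideanSpace ℝ (Fin n)) (hv : v ∈ U)
    (ω κ : ℝ)
    (hA1 : ∀ t ∈ Set.Icc (0:ℝ) 1,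
      ‖A.symm ((J xn - J (t • xn + (1 - t) • v)) (xn - v))‖
        ≤ ω * (1 - t) * ‖xn - v‖ ^ 2)
    (hA2 : ‖ContinuousLinearMap.id ℝ (EuclideanSpace ℝ (Fin n))
        - (A.symm : EuclideanSpace ℝ (Fin n) →L[ℝ] EuclideanSpace ℝ (Fin n)).comp (J xn)‖
        ≤ κ) :
    ‖(xn - v) - A.symm (f xn - f v)‖ ≤ (κ + ω / 2 * ‖xn - v‖) * ‖xn - v‖ :=
  hUconv.norm_sub_sub_apply_image_sub_le hf hxn hv
    (A.symm : EuclideanSpace ℝ (Fin n) →L[ℝ] EuclideanSpace ℝ (Fin n)) hA1 hA2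

/-- **Key estimate** in the proof of Theorem 1: under the affine covariant Lipschitz
condition (A1) along the segment from `v` to `xn` and the approximation condition (A2),
one has `‖(xn - v) - A⁻¹(f xn - f v)‖ ≤ (κ + (ω/2)‖xn - v‖)·‖xn - v‖`. -/
theorem newton_increment_estimate
    {n : ℕ} (hn : 1 ≤ n)
    (U : Set (EuclideanSpace ℝ (Fin n))) (hUopen : IsOpen U) (hUconv : Convex ℝ U)
    (f : EuclideanSpace ℝ (Fin n) → EuclideanSpace ℝ (Fin n))
    (J : EuclideanSpace ℝ (Fin n) →
      (EuclideanSpace ℝ (Fin n) →L[ℝ] EuclideanSpace ℝ (Fin n)))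
    (hf : ∀ x ∈ U, HasFDerivAt f (J x) x)
    (hJcont : ContinuousOn J U)
    (xn : EuclideanSpace ℝ (Fin n)) (hxn : xn ∈ U)
    (A : EuclideanSpace ℝ (Fin n) ≃L[ℝ] EuclideanSpace ℝ (Fin n))
    (v : EuclideanSpace ℝ (Fin n)) (hv : v ∈ U)
    (ω κ : ℝ) (hω : 0 < ω) (hκ0 : 0 ≤ κ) (hκ1 : κ < 1)
    (hA1 : ∀ t ∈ Set.Icc (0:ℝ) 1,
      ‖A.symm ((J xn - J (t • xn + (1 - t) • v)) (xn - v))‖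
        ≤ ω * (1 - t) * ‖xn - v‖ ^ 2)
    (hA2 : ‖ContinuousLinearMap.id ℝ (EuclideanSpace ℝ (Fin n))
        - (A.symm : EuclideanSpace ℝ (Fin n) →L[ℝ] EuclideanSpace ℝ (Fin n)).comp (J xn)‖
        ≤ κ) :
    ‖(xn - v) - A.symm (f xn - f v)‖ ≤ (κ + ω / 2 * ‖xn - v‖) * ‖xn - v‖ :=
  newton_increment_estimate_general U hUconv f J hf xn hxn A v hv ω κ hA1 hA2
end

section
/- Let n ≥ 1, let U ⊆ ℝⁿ be open and convex, let f : ℝⁿ → ℝⁿ be continuously differentiable on U with Jacobian J_f, let xₙ ∈ U, and let A : ℝⁿ → ℝⁿ be an invertible linear map. Assume: (A1) there is ω > 0 such that for every v ∈ U and every t ∈ [0,1], writing z = t·xₙ + (1−t)·v, one has ‖A⁻¹ (J_f(xₙ) − J_f(z)) (xₙ − v)‖ ≤ ω (1−t) ‖xₙ − v‖²; (A2) there is κ ∈ [0,1) with ‖Id − A⁻¹ J_f(xₙ)‖ ≤ κ; (A3) setting αₙ = ‖A⁻¹ f(xₙ)‖, one has ω αₙ ≤ (1−κ)²/2; and the closed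 ball of radius r = (1−κ)/ω − √((1−κ)²/ω² − 2αₙ/ω) centered at xₙ is contained in U. Then the map g(v) = v − A⁻¹ f(v) maps the closed ball B_r(xₙ) into itself. -/
/-!
For `v` in the ball write `R = ‖v - xₙ‖`. Splitting
`g v - xₙ = -A⁻¹ f(xₙ) + (Id - A⁻¹ J_f(xₙ))(v - xₙ) - (A⁻¹ f(v) - A⁻¹ f(xₙ) - A⁻¹ J_f(xₙ)(v - xₙ))`,
(A3), (A2) and the Taylor remainder estimate that (A1) yields along the segment `[xₙ, v]` give
`‖g v - xₙ‖ ≤ αₙ + κ R + (ω/2) R²`. The right-hand side is increasing in `R ≥ 0` and equals `r`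
at `R = r`, because `r` is a root of `αₙ + κ R + (ω/2) R² = R`.
-/

open Set

theorem add_mul_add_half_mul_sq_eq_self {α κ ω r : ℝ} (hω : ω ≠ 0)
    (hdisc : ω * α ≤ (1 - κ) ^ 2 / 2)
    (hr : r = (1 - κ) / ω - Real.sqrt ((1 - κ) ^ 2 / ω ^ 2 - 2 * α / ω)) :
    α + κ * r + ω / 2 * r ^ 2 = r := by
  set s := Real.sqrt ((1 - κ) ^ 2 / ω ^ 2 - 2 * α / ω)
  have hs : s ^ 2 = (1 - κ) ^ 2 / ω ^ 2 - 2 * α / ω := by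
    refine Real.sq_sqrt ?_
    have : (1 - κ) ^ 2 / ω ^ 2 - 2 * α / ω = ((1 - κ) ^ 2 - 2 * (ω * α)) / ω ^ 2 := by
      field_simp
    rw [this]
    exact div_nonneg (by linarith) (sq_nonneg ω)
  have hωs : ω * s ^ 2 = ω * ((1 - κ) / ω) ^ 2 - 2 * α := by
    rw [hs]; field_simp
  have hωq : ω * ((1 - κ) / ω) = 1 - κ := by field_simp
  subst hr
  linear_combination (1 / 2) * hωs + ((1 - κ) / ω - s) * hωq

section Remainder

variable {E F : Type*} [NormedAddCommGroup E] [NormedSpace ℝ E]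
  [NormedAddCommGroup F] [NormedSpace ℝ F]

theorem norm_sub_le_half_of_norm_deriv_le_mul {φ φ' : ℝ → F} {C : ℝ}
    (hφ : ∀ t ∈ Icc (0 : ℝ) 1, HasDerivAt φ (φ' t) t)
    (hφ' : ∀ t ∈ Icc (0 : ℝ) 1, ‖φ' t‖ ≤ C * t) :
    ‖φ 1 - φ 0‖ ≤ C / 2 := by
  have hB : ∀ t, HasDerivAt (fun t : ℝ => C * t ^ 2 / 2) (C * t) t := fun t =>
    (((hasDerivAt_pow 2 t).const_mul C).div_const 2).congr_deriv (by ring)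
  have := image_norm_le_of_norm_deriv_right_le_deriv_boundary (f := fun t => φ t - φ 0)
    (fun t ht => ((hφ t ht).sub_const _).continuousAt.continuousWithinAt)
    (fun t ht => ((hφ t (Ico_subset_Icc_self ht)).sub_const _).hasDerivWithinAt)
    (by simp) hB (fun t ht => hφ' t (Ico_subset_Icc_self ht)) (right_mem_Icc.2 zero_le_one)
  simpa using this

theorem norm_sub_sub_fderiv_le_of_segment {g : E → F} {L : E → E →L[ℝ] F} {x v : E} {C : ℝ}
    (hg : ∀ t ∈ Icc (0 : ℝ) 1, HasFDerivAt g (L (x + t • (v - x))) (x + t • (v - x)))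
    (hL : ∀ t ∈ Icc (0 : ℝ) 1, ‖(L (x + t • (v - x)) - L x) (v - x)‖ ≤ C * t) :
    ‖g v - g x - L x (v - x)‖ ≤ C / 2 := by
  have hpath : ∀ t : ℝ, HasDerivAt (fun t : ℝ => x + t • (v - x)) (v - x) t := fun t => by
    simpa using ((hasDerivAt_id t).smul_const (v - x)).const_add x
  have key := norm_sub_le_half_of_norm_deriv_le_mul
    (φ := fun t => g (x + t • (v - x)) - t • L x (v - x)) (hφ' := hL) fun t ht =>
      (((hg t ht).comp_hasDerivAt t (hpath t)).sub
        ((hasDerivAt_id' t).smul_const (L x (v - x)))).congr_deriv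
        (by rw [one_smul, sub_apply])
  simp only [one_smul, zero_smul, add_sub_cancel, add_zero, sub_zero] at key
  rwa [sub_right_comm] at key

theorem norm_map_sub_sub_fderiv_le_of_affine_lipschitz {G : Type*} [NormedAddCommGroup G]
    [NormedSpace ℝ G] {f : E → F} {J : E → E →L[ℝ] F} (B : F →L[ℝ] G) {x v : E} {ω : ℝ}
    (hf : ∀ t ∈ Icc (0 : ℝ) 1, HasFDerivAt f (J (x + t • (v - x))) (x + t • (v - x)))
    (hJ : ∀ t ∈ Icc (0 : ℝ) 1,
      ‖B ((J x - J (t • x + (1 - t) • v)) (x - v))‖ ≤ ω * (1 - t) * ‖x - v‖ ^ 2) :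
    ‖B (f v) - B (f x) - (B.comp (J x)) (v - x)‖ ≤ ω * ‖v - x‖ ^ 2 / 2 := by
  refine norm_sub_sub_fderiv_le_of_segment (g := fun y => B (f y))
    (L := fun y => B.comp (J y)) (fun t ht => B.hasFDerivAt.comp _ (hf t ht)) fun t ht => ?_
  have hz : (1 - t) • x + (1 - (1 - t)) • v = x + t • (v - x) := by module
  calc _ = ‖B ((J x - J ((1 - t) • x + (1 - (1 - t)) • v)) (x - v))‖ := by
        rw [hz]
        congr 1
        simp only [sub_apply, ContinuousLinearMap.comp_apply, map_sub]
        abel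
    _ ≤ ω * (1 - (1 - t)) * ‖x - v‖ ^ 2 := hJ (1 - t) ⟨by linarith [ht.2], by linarith [ht.1]⟩
    _ = ω * ‖v - x‖ ^ 2 * t := by rw [norm_sub_rev]; ring

end Remainder

theorem norm_sub_sub_le_of_linearization {E : Type*} [NormedAddCommGroup E] [NormedSpace ℝ E]
    (G : E → E) (L : E →L[ℝ] E) (x v : E) :
    ‖v - G v - x‖ ≤ ‖G x‖ + ‖ContinuousLinearMap.id ℝ E - L‖ * ‖v - x‖
      + ‖G v - G x - L (v - x)‖ := by
  have hsplit : v - G v - x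
      = -G x + (ContinuousLinearMap.id ℝ E - L) (v - x) - (G v - G x - L (v - x)) := by
    simp only [sub_apply, ContinuousLinearMap.id_apply]
    abel
  calc ‖v - G v - x‖
      ≤ ‖-G x‖ + ‖(ContinuousLinearMap.id ℝ E - L) (v - x)‖ + ‖G v - G x - L (v - x)‖ := by
        rw [hsplit]
        exact (norm_sub_le _ _).trans (by gcongr; exact norm_add_le _ _)
    _ ≤ _ := by
        rw [norm_neg]
        gcongr
        exact ContinuousLinearMap.le_opNorm _ _

theorem simplified_newton_maps_small_ball_into_itself_general
    {n : ℕ}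
    (U : Set (EuclideanSpace ℝ (Fin n)))
    (f : EuclideanSpace ℝ (Fin n) → EuclideanSpace ℝ (Fin n))
    (J : EuclideanSpace ℝ (Fin n) →
      (EuclideanSpace ℝ (Fin n) →L[ℝ] EuclideanSpace ℝ (Fin n)))
    (hf : ∀ x ∈ U, HasFDerivAt f (J x) x)
    (xn : EuclideanSpace ℝ (Fin n))
    (A : EuclideanSpace ℝ (Fin n) ≃L[ℝ] EuclideanSpace ℝ (Fin n))
    (ω κ : ℝ) (hω : 0 < ω) (hκ0 : 0 ≤ κ)
    (hA1 : ∀ v ∈ U, ∀ t ∈ Set.Icc (0:ℝ) 1,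
      ‖A.symm ((J xn - J (t • xn + (1 - t) • v)) (xn - v))‖
        ≤ ω * (1 - t) * ‖xn - v‖ ^ 2)
    (hA2 : ‖ContinuousLinearMap.id ℝ (EuclideanSpace ℝ (Fin n))
        - (A.symm : EuclideanSpace ℝ (Fin n) →L[ℝ] EuclideanSpace ℝ (Fin n)).comp (J xn)‖
        ≤ κ)
    (α : ℝ) (hα : α = ‖A.symm (f xn)‖)
    (hA3 : ω * α ≤ (1 - κ) ^ 2 / 2)
    (r : ℝ) (hr : r = (1 - κ) / ω - Real.sqrt ((1 - κ) ^ 2 / ω ^ 2 - 2 * α / ω))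
    (hball : Metric.closedBall xn r ⊆ U) :
    Set.MapsTo (fun v => v - A.symm (f v))
      (Metric.closedBall xn r) (Metric.closedBall xn r) := by
  intro v hv
  have hvr : ‖v - xn‖ ≤ r := by rwa [Metric.mem_closedBall, dist_eq_norm] at hv
  have hseg : ∀ t ∈ Icc (0 : ℝ) 1, xn + t • (v - xn) ∈ U := fun t ht =>
    hball ((convex_closedBall xn r).add_smul_sub_mem (Metric.mem_closedBall_self
      (dist_nonneg.trans hv)) hv ht)
  have hrem := norm_map_sub_sub_fderiv_le_of_affine_lipschitz
    (A.symm : EuclideanSpace ℝ (Fin n) →L[ℝ] EuclideanSpace ℝ (Fin n))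
    (fun t ht => hf _ (hseg t ht)) (hA1 v (hball hv))
  simp only [ContinuousLinearEquiv.coe_coe] at hrem
  rw [Metric.mem_closedBall, dist_eq_norm]
  calc ‖v - A.symm (f v) - xn‖
      ≤ α + κ * ‖v - xn‖ + ω / 2 * ‖v - xn‖ ^ 2 := by
        have hsplit := norm_sub_sub_le_of_linearization (fun y => A.symm (f y))
          ((A.symm : EuclideanSpace ℝ (Fin n) →L[ℝ] EuclideanSpace ℝ (Fin n)).comp (J xn)) xn v
        have hlin := mul_le_mul_of_nonneg_right hA2 (norm_nonneg (v - xn))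
        beta_reduce at hsplit
        linarith
    _ ≤ α + κ * r + ω / 2 * r ^ 2 := by gcongr
    _ = r := add_mul_add_half_mul_sq_eq_self hω.ne' hA3 hr

/-- Ball invariance for the **smaller root**: under (A1)--(A3) and assuming the closed
ball of radius `r = (1-κ)/ω - √((1-κ)²/ω² - 2αₙ/ω)` around `xn` lies in `U`, the
simplified Newton map `g v = v - A⁻¹ (f v)` maps `B_r(xn)` into itself. -/
theorem simplified_newton_maps_small_ball_into_itself
    {n : ℕ} (hn : 1 ≤ n)
    (U : Set (EuclideanSpace ℝ (Fin n))) (hUopen : IsOpen U) (hUconv : Convex ℝ U)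
    (f : EuclideanSpace ℝ (Fin n) → EuclideanSpace ℝ (Fin n))
    (J : EuclideanSpace ℝ (Fin n) →
      (EuclideanSpace ℝ (Fin n) →L[ℝ] EuclideanSpace ℝ (Fin n)))
    (hf : ∀ x ∈ U, HasFDerivAt f (J x) x)
    (hJcont : ContinuousOn J U)
    (xn : EuclideanSpace ℝ (Fin n)) (hxn : xn ∈ U)
    (A : EuclideanSpace ℝ (Fin n) ≃L[ℝ] EuclideanSpace ℝ (Fin n))
    (ω κ : ℝ) (hω : 0 < ω) (hκ0 : 0 ≤ κ) (hκ1 : κ < 1)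
    (hA1 : ∀ v ∈ U, ∀ t ∈ Set.Icc (0:ℝ) 1,
      ‖A.symm ((J xn - J (t • xn + (1 - t) • v)) (xn - v))‖
        ≤ ω * (1 - t) * ‖xn - v‖ ^ 2)
    (hA2 : ‖ContinuousLinearMap.id ℝ (EuclideanSpace ℝ (Fin n))
        - (A.symm : EuclideanSpace ℝ (Fin n) →L[ℝ] EuclideanSpace ℝ (Fin n)).comp (J xn)‖
        ≤ κ)
    (α : ℝ) (hα : α = ‖A.symm (f xn)‖)
    (hA3 : ω * α ≤ (1 - κ) ^ 2 / 2)
    (r : ℝ) (hr : r = (1 - κ) / ω - Real.sqrt ((1 - κ) ^ 2 / ω ^ 2 - 2 * α / ω))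
    (hball : Metric.closedBall xn r ⊆ U) :
    Set.MapsTo (fun v => v - A.symm (f v))
      (Metric.closedBall xn r) (Metric.closedBall xn r) :=
  simplified_newton_maps_small_ball_into_itself_general U f J hf xn A ω κ hω hκ0 hA1 hA2 α hα hA3 r
    hr hball
end

section
/- Let n ≥ 1, let U ⊆ ℝⁿ be open and convex, let f : ℝⁿ → ℝⁿ be continuously differentiable on U with Jacobian J_f, let xₙ ∈ U, and let A : ℝⁿ → ℝⁿ be an invertible linear map. Assume: (A★1) there is ω★ > 0 such that for all x, v ∈ U and every t ∈ [0,1], writing z = t·x + (1−t)·v, one has ‖A⁻¹ (J_f(x) − J_f(z)) (x − v)‖ ≤ ω★ (1−t) ‖x − v‖²; (A★2) there is κ★ ∈ [0,1) such that ‖Id − A⁻¹ J_f(x)‖ ≤ κ★ for all x ∈ U; (A★3) αₙ = ‖A⁻¹ f(xₙ)‖ > 0 and ω★ αₙ ≤ (1−κ★)²/2; (A★4) the closed ball of radius R★ = (1−κ★)/ω★ + √((1−κ★)²/(ω★)² − 2αₙ/ω★) centered at xₙ is contained in U. Then the map g(v) = v − A⁻¹ f(v) maps the closed ball B_{R★}(xₙ)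 into itself. -/
/-- **First part of Theorem 2**: under the strengthened assumptions (A★1)--(A★4),
the simplified Newton map `g v = v - A⁻¹ (f v)` maps the closed ball of radius
`R★ = (1-κ★)/ω★ + √((1-κ★)²/(ω★)² - 2αₙ/ω★)` around `xn` into itself. -/
theorem simplified_newton_maps_ball_into_itself_star
    {n : ℕ} (hn : 1 ≤ n)
    (U : Set (EuclideanSpace ℝ (Fin n))) (hUopen : IsOpen U) (hUconv : Convex ℝ U)
    (f : EuclideanSpace ℝ (Fin n) → EuclideanSpace ℝ (Fin n))
    (J : EuclideanSpace ℝ (Fin n) →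
      (EuclideanSpace ℝ (Fin n) →L[ℝ] EuclideanSpace ℝ (Fin n)))
    (hf : ∀ x ∈ U, HasFDerivAt f (J x) x)
    (hJcont : ContinuousOn J U)
    (xn : EuclideanSpace ℝ (Fin n)) (hxn : xn ∈ U)
    (A : EuclideanSpace ℝ (Fin n) ≃L[ℝ] EuclideanSpace ℝ (Fin n))
    (ω κ : ℝ) (hω : 0 < ω) (hκ0 : 0 ≤ κ) (hκ1 : κ < 1)
    (hA1 : ∀ x ∈ U, ∀ v ∈ U, ∀ t ∈ Set.Icc (0:ℝ) 1,
      ‖A.symm ((J x - J (t • x + (1 - t) • v)) (x - v))‖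
        ≤ ω * (1 - t) * ‖x - v‖ ^ 2)
    (hA2 : ∀ x ∈ U,
      ‖ContinuousLinearMap.id ℝ (EuclideanSpace ℝ (Fin n))
        - (A.symm : EuclideanSpace ℝ (Fin n) →L[ℝ] EuclideanSpace ℝ (Fin n)).comp (J x)‖
        ≤ κ)
    (α : ℝ) (hα : α = ‖A.symm (f xn)‖) (hαpos : 0 < α)
    (hA3 : ω * α ≤ (1 - κ) ^ 2 / 2)
    (R : ℝ) (hR : R = (1 - κ) / ω + Real.sqrt ((1 - κ) ^ 2 / ω ^ 2 - 2 * α / ω))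
    (hA4 : Metric.closedBall xn R ⊆ U) :
    Set.MapsTo (fun v => v - A.symm (f v))
      (Metric.closedBall xn R) (Metric.closedBall xn R) := by
  have hκ1' : 0 < 1 - κ := by linarith
  set g : EuclideanSpace ℝ (Fin n) → EuclideanSpace ℝ (Fin n) :=
    fun v => v - A.symm (f v) with hg
  have hRge : (1 - κ) / ω ≤ R := by
    rw [hR]
    have := Real.sqrt_nonneg ((1 - κ) ^ 2 / ω ^ 2 - 2 * α / ω)
    linarith
  have hR0 : 0 ≤ R := le_trans (by positivity) hRge
  have hxnball : xn ∈ Metric.closedBall xn R := Metric.mem_closedBall_self hR0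
  have hgderiv : ∀ x ∈ Metric.closedBall xn R,
      HasFDerivWithinAt g (ContinuousLinearMap.id ℝ (EuclideanSpace ℝ (Fin n)) -
        (A.symm : EuclideanSpace ℝ (Fin n) →L[ℝ] EuclideanSpace ℝ (Fin n)).comp (J x))
        (Metric.closedBall xn R) x := by
    intro x hx
    have hfx := hf x (hA4 hx)
    have h2 : HasFDerivAt (fun v => A.symm (f v))
        ((A.symm : EuclideanSpace ℝ (Fin n) →L[ℝ] EuclideanSpace ℝ (Fin n)).comp (J x)) x :=
      ((A.symm : EuclideanSpace ℝ (Fin n) →L[ℝ] EuclideanSpace ℝ (Fin n)).hasFDerivAt).comp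
        x hfx
    exact ((hasFDerivAt_id x).sub h2).hasFDerivWithinAt
  have hbound : ∀ x ∈ Metric.closedBall xn R,
      ‖ContinuousLinearMap.id ℝ (EuclideanSpace ℝ (Fin n)) -
        (A.symm : EuclideanSpace ℝ (Fin n) →L[ℝ] EuclideanSpace ℝ (Fin n)).comp (J x)‖ ≤ κ :=
    fun x hx => hA2 x (hA4 hx)
  intro v hv
  have hmvt : ‖g v - g xn‖ ≤ κ * ‖v - xn‖ :=
    (convex_closedBall xn R).norm_image_sub_le_of_norm_hasFDerivWithin_le
      hgderiv hbound hxnball hv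
  have hgxn : ‖g xn - xn‖ = α := by
    simp only [hg, hα]
    rw [sub_sub_cancel_left, norm_neg]
  have hvxn : ‖v - xn‖ ≤ R := by
    rw [← dist_eq_norm]; exact Metric.mem_closedBall.mp hv
  have hαR : α ≤ (1 - κ) * R := by
    have hRω : 1 - κ ≤ R * ω := (div_le_iff₀ hω).mp hRge
    have h2 : (1 - κ) * (1 - κ) ≤ (1 - κ) * (R * ω) :=
      mul_le_mul_of_nonneg_left hRω hκ1'.le
    have h3 : 2 * (ω * α) ≤ (1 - κ) ^ 2 := by linarith
    nlinarith [mul_pos hω hαpos]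
  have : ‖g v - xn‖ ≤ R := by
    calc ‖g v - xn‖ ≤ ‖g v - g xn‖ + ‖g xn - xn‖ := norm_sub_le_norm_sub_add_norm_sub _ _ _
      _ ≤ κ * ‖v - xn‖ + α := by rw [hgxn]; linarith
      _ ≤ κ * R + (1 - κ) * R := by nlinarith
      _ = R := by ring
  simpa [Metric.mem_closedBall, dist_eq_norm] using this
end

section
/- Let n ≥ 1, let U ⊆ ℝⁿ be open and convex, let f : ℝⁿ → ℝⁿ be continuously differentiable on U with Jacobian J_f, let xₙ ∈ U, and let A : ℝⁿ → ℝⁿ be an invertible linear map. Assume: (A★1) there is ω★ > 0 such that for all x, v ∈ U and every t ∈ [0,1], writing z = t·x + (1−t)·v, one has ‖A⁻¹ (J_f(x) − J_f(z)) (x − v)‖ ≤ ω★ (1−t) ‖x − v‖²; (A★2) there is κ★ ∈ [0,1) such that ‖Id − A⁻¹ J_f(x)‖ ≤ κ★ for all x ∈ U; (A★3) αₙ = ‖A⁻¹ f(xₙ)‖ > 0 and ω★ αₙ ≤ (1−κ★)²/2; (A★4) the closed ball of radius R★ = (1−κ★)/ω★ + √((1−κ★)²/(ω★)² − 2αₙ/ω★)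 centered at xₙ is contained in U. Define the simplified Newton iterates by u₀ = xₙ and u_{j+1} = u_j − A⁻¹ f(u_j). Then all iterates u_j lie in the closed ball B_{R★}(xₙ), the sequence (u_j) converges to a limit u_∞ ∈ B_{R★}(xₙ), and u_∞ is the unique zero of f in B_{R★}(xₙ). -/
/-!
The simplified Newton step `g v = v - A⁻¹ f v` has derivative `id - A⁻¹ J_f`, so by (A★2)
and the mean value inequality it is a `κ★`-contraction on the convex set `U`. Since `g`
moves the centre `xₙ` by `αₙ ≤ (1 - κ★) R★`, it maps `B_{R★}(xₙ)` into itself, and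
Banach's fixed-point theorem yields the limit of the iterates as the unique fixed point
of `g`, i.e. the unique zero of `f`, in the ball.
-/

open Metric Filter Topology Function Set
open scoped NNReal

theorem LipschitzOnWith.mapsTo_closedBall {E : Type*} [PseudoMetricSpace E] {g : E → E}
    {K : ℝ≥0} {x : E} {R : ℝ} (hg : LipschitzOnWith K g (closedBall x R))
    (hx : dist (g x) x ≤ (1 - K) * R) : MapsTo g (closedBall x R) (closedBall x R) := by
  intro v hv
  have hxR : x ∈ closedBall x R := mem_closedBall_self (dist_nonneg.trans hv)
  rw [mem_closedBall] at hv ⊢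
  calc dist (g v) x ≤ dist (g v) (g x) + dist (g x) x := dist_triangle _ _ _
    _ ≤ K * dist v x + (1 - K) * R := add_le_add (hg.dist_le_mul v (by simpa) x hxR) hx
    _ ≤ K * R + (1 - K) * R := by gcongr
    _ = R := by ring

theorem LipschitzOnWith.exists_unique_fixedPoint_closedBall {E : Type*} [MetricSpace E]
    [CompleteSpace E] {g : E → E} {K : ℝ≥0} {x : E} {R : ℝ}
    (hg : LipschitzOnWith K g (closedBall x R)) (hK : K < 1)
    (hx : dist (g x) x ≤ (1 - K) * R) :
    (∀ j : ℕ, g^[j] x ∈ closedBall x R) ∧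
    ∃ y ∈ closedBall x R, IsFixedPt g y ∧ Tendsto (fun j ↦ g^[j] x) atTop (𝓝 y) ∧
      ∀ z ∈ closedBall x R, IsFixedPt g z → z = y := by
  have hmaps := hg.mapsTo_closedBall hx
  have hxR : x ∈ closedBall x R :=
    mem_closedBall_self (nonneg_of_mul_nonneg_right (dist_nonneg.trans hx) (sub_pos.mpr hK))
  have hcontr : ContractingWith K (hmaps.restrict g _ _) := ⟨hK, hg.mapsToRestrict hmaps⟩
  obtain ⟨y, hy, hfix, htend, -⟩ :=
    hcontr.exists_fixedPoint' isClosed_closedBall.isComplete hmaps hxR (edist_ne_top _ _)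
  refine ⟨fun j ↦ hmaps.iterate j hxR, y, hy, hfix, htend, fun z hz hzfix ↦ ?_⟩
  exact congrArg Subtype.val <| hcontr.fixedPoint_unique' (x := ⟨z, hz⟩) (y := ⟨y, hy⟩)
    (Subtype.ext hzfix) (Subtype.ext hfix)

section SimplifiedNewtonStep

variable {E F : Type*} [NormedAddCommGroup E] [NormedSpace ℝ E] [NormedAddCommGroup F]
  [NormedSpace ℝ F]

def simplifiedNewtonStep (A : E ≃L[ℝ] F) (f : E → F) (v : E) : E := v - A.symm (f v)

theorem dist_simplifiedNewtonStep_self (A : E ≃L[ℝ] F) (f : E → F) (v : E) :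
    dist (simplifiedNewtonStep A f v) v = ‖A.symm (f v)‖ := by
  rw [dist_eq_norm, simplifiedNewtonStep, sub_sub_cancel_left, norm_neg]

theorem isFixedPt_simplifiedNewtonStep_iff (A : E ≃L[ℝ] F) (f : E → F) (v : E) :
    IsFixedPt (simplifiedNewtonStep A f) v ↔ f v = 0 := by
  simp [IsFixedPt, simplifiedNewtonStep]

theorem Convex.lipschitzOnWith_simplifiedNewtonStep {U : Set E} (hU : Convex ℝ U)
    {f : E → F} {J : E → E →L[ℝ] F} (hf : ∀ x ∈ U, HasFDerivAt f (J x) x) (A : E ≃L[ℝ] F)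
    {K : ℝ≥0}
    (hJ : ∀ x ∈ U, ‖ContinuousLinearMap.id ℝ E - (A.symm : F →L[ℝ] E).comp (J x)‖ ≤ K) :
    LipschitzOnWith K (simplifiedNewtonStep A f) U :=
  hU.lipschitzOnWith_of_nnnorm_hasFDerivWithin_le
    (fun x hx ↦ ((hasFDerivAt_id x).sub (A.symm.hasFDerivAt.comp x (hf x hx))).hasFDerivWithinAt)
    hJ

end SimplifiedNewtonStep

theorem le_one_sub_mul_newton_radius {ω κ α : ℝ} (hω : 0 < ω) (hκ : κ ≤ 1)
    (h : ω * α ≤ (1 - κ) ^ 2 / 2) :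
    α ≤ (1 - κ) * ((1 - κ) / ω + √((1 - κ) ^ 2 / ω ^ 2 - 2 * α / ω)) :=
  calc α ≤ (1 - κ) ^ 2 / ω := by rw [le_div_iff₀ hω]; linarith [sq_nonneg (1 - κ)]
    _ = (1 - κ) * ((1 - κ) / ω) := by ring
    _ ≤ _ := mul_le_mul_of_nonneg_left (le_add_of_nonneg_right (Real.sqrt_nonneg _)) (by linarith)

theorem simplified_newton_iterates_converge_to_unique_zero_general
    {n : ℕ}
    (U : Set (EuclideanSpace ℝ (Fin n))) (hUconv : Convex ℝ U)
    (f : EuclideanSpace ℝ (Fin n) → EuclideanSpace ℝ (Fin n))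
    (J : EuclideanSpace ℝ (Fin n) →
      (EuclideanSpace ℝ (Fin n) →L[ℝ] EuclideanSpace ℝ (Fin n)))
    (hf : ∀ x ∈ U, HasFDerivAt f (J x) x)
    (xn : EuclideanSpace ℝ (Fin n))
    (A : EuclideanSpace ℝ (Fin n) ≃L[ℝ] EuclideanSpace ℝ (Fin n))
    (ω κ : ℝ) (hω : 0 < ω) (hκ0 : 0 ≤ κ) (hκ1 : κ < 1)
    (hA2 : ∀ x ∈ U,
      ‖ContinuousLinearMap.id ℝ (EuclideanSpace ℝ (Fin n))
        - (A.symm : EuclideanSpace ℝ (Fin n) →L[ℝ] EuclideanSpace ℝ (Fin n)).comp (J x)‖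
        ≤ κ)
    (α : ℝ) (hα : α = ‖A.symm (f xn)‖)
    (hA3 : ω * α ≤ (1 - κ) ^ 2 / 2)
    (R : ℝ) (hR : R = (1 - κ) / ω + Real.sqrt ((1 - κ) ^ 2 / ω ^ 2 - 2 * α / ω))
    (hA4 : Metric.closedBall xn R ⊆ U)
    (u : ℕ → EuclideanSpace ℝ (Fin n))
    (hu0 : u 0 = xn)
    (hu : ∀ j : ℕ, u (j + 1) = u j - A.symm (f (u j))) :
    (∀ j : ℕ, u j ∈ Metric.closedBall xn R) ∧
    ∃ uinf ∈ Metric.closedBall xn R,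
      Filter.Tendsto u Filter.atTop (nhds uinf) ∧ f uinf = 0 ∧
      ∀ w ∈ Metric.closedBall xn R, f w = 0 → w = uinf := by
  let K : ℝ≥0 := ⟨κ, hκ0⟩
  have hlip : LipschitzOnWith K (simplifiedNewtonStep A f) U :=
    hUconv.lipschitzOnWith_simplifiedNewtonStep hf A hA2
  have hstep : dist (simplifiedNewtonStep A f xn) xn ≤ (1 - K) * R := by
    rw [dist_simplifiedNewtonStep_self, ← hα, hR]
    exact le_one_sub_mul_newton_radius hω hκ1.le hA3
  have hu_iter : u = fun j ↦ (simplifiedNewtonStep A f)^[j] xn := by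
    funext j
    induction j with
    | zero => exact hu0
    | succ j ih => rw [hu j, ih, iterate_succ_apply']; rfl
  obtain ⟨hmem, y, hy, hfix, htend, huniq⟩ :=
    (hlip.mono hA4).exists_unique_fixedPoint_closedBall (show K < 1 from hκ1) hstep
  subst hu_iter
  exact ⟨hmem, y, hy, htend, (isFixedPt_simplifiedNewtonStep_iff A f y).mp hfix,
    fun w hw hfw ↦ huniq w hw ((isFixedPt_simplifiedNewtonStep_iff A f w).mpr hfw)⟩

/-- **Corollary** (convergence of the simplified Newton iteration).
Under the strengthened assumptions (A★1)--(A★4), the simplified Newton iterates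
`u₀ = xn`, `u_{j+1} = u_j - A⁻¹ f(u_j)` all remain in the closed ball `B_{R★}(xn)`
and converge to the unique zero of `f` in `B_{R★}(xn)`. -/
theorem simplified_newton_iterates_converge_to_unique_zero
    {n : ℕ} (hn : 1 ≤ n)
    (U : Set (EuclideanSpace ℝ (Fin n))) (hUopen : IsOpen U) (hUconv : Convex ℝ U)
    (f : EuclideanSpace ℝ (Fin n) → EuclideanSpace ℝ (Fin n))
    (J : EuclideanSpace ℝ (Fin n) →
      (EuclideanSpace ℝ (Fin n) →L[ℝ] EuclideanSpace ℝ (Fin n)))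
    (hf : ∀ x ∈ U, HasFDerivAt f (J x) x)
    (hJcont : ContinuousOn J U)
    (xn : EuclideanSpace ℝ (Fin n)) (hxn : xn ∈ U)
    (A : EuclideanSpace ℝ (Fin n) ≃L[ℝ] EuclideanSpace ℝ (Fin n))
    (ω κ : ℝ) (hω : 0 < ω) (hκ0 : 0 ≤ κ) (hκ1 : κ < 1)
    (hA1 : ∀ x ∈ U, ∀ v ∈ U, ∀ t ∈ Set.Icc (0:ℝ) 1,
      ‖A.symm ((J x - J (t • x + (1 - t) • v)) (x - v))‖
        ≤ ω * (1 - t) * ‖x - v‖ ^ 2)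
    (hA2 : ∀ x ∈ U,
      ‖ContinuousLinearMap.id ℝ (EuclideanSpace ℝ (Fin n))
        - (A.symm : EuclideanSpace ℝ (Fin n) →L[ℝ] EuclideanSpace ℝ (Fin n)).comp (J x)‖
        ≤ κ)
    (α : ℝ) (hα : α = ‖A.symm (f xn)‖) (hαpos : 0 < α)
    (hA3 : ω * α ≤ (1 - κ) ^ 2 / 2)
    (R : ℝ) (hR : R = (1 - κ) / ω + Real.sqrt ((1 - κ) ^ 2 / ω ^ 2 - 2 * α / ω))
    (hA4 : Metric.closedBall xn R ⊆ U)
    (u : ℕ → EuclideanSpace ℝ (Fin n))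
    (hu0 : u 0 = xn)
    (hu : ∀ j : ℕ, u (j + 1) = u j - A.symm (f (u j))) :
    (∀ j : ℕ, u j ∈ Metric.closedBall xn R) ∧
    ∃ uinf ∈ Metric.closedBall xn R,
      Filter.Tendsto u Filter.atTop (nhds uinf) ∧ f uinf = 0 ∧
      ∀ w ∈ Metric.closedBall xn R, f w = 0 → w = uinf :=
  simplified_newton_iterates_converge_to_unique_zero_general U hUconv f J hf xn A ω κ hω hκ0 hκ1 hA2
    α hα hA3 R hR hA4 u hu0 hu
end

section
/- Let n ≥ 1, let U ⊆ ℝⁿ be open, let f : ℝⁿ → ℝⁿ be continuously differentiable on U with Jacobian J_f invertible at every point of U, let x₀ ∈ U, and let x : [0, ∞) → U be a differentiable curve satisfying the continuous Newton equation x′(t) = −J_f(x(t))⁻¹ f(x(t)) for all t ≥ 0, with x(0) = x₀. Then f(x(t)) = e^{−t} · f(x₀) for all t ≥ 0. -/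
/-!
Along a Newton trajectory the chain rule gives `(f ∘ x)′ = J_f(x) x′ = -(f ∘ x)`, so the
residual solves `y′ = -y`; then `eᵗ • y(t)` has zero derivative and is constant.
-/

open Set

theorem eq_exp_neg_smul_of_hasDerivWithinAt_neg {E : Type*} [NormedAddCommGroup E]
    [NormedSpace ℝ E] {y : ℝ → E}
    (hy : ∀ t : ℝ, 0 ≤ t → HasDerivWithinAt y (-y t) (Ici 0) t) {t : ℝ} (ht : 0 ≤ t) :
    y t = Real.exp (-t) • y 0 := by
  set g : ℝ → E := fun s => Real.exp s • y s
  have hg : ∀ s : ℝ, 0 ≤ s → HasDerivWithinAt g 0 (Ici 0) s := fun s hs => by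
    have h := (Real.hasDerivAt_exp s).hasDerivWithinAt.smul (hy s hs)
    rwa [smul_neg, neg_add_cancel] at h
  have hconst : g t = g 0 :=
    constant_of_has_deriv_right_zero
      (fun s hs => (hg s hs.1).continuousWithinAt.mono Icc_subset_Ici_self)
      (fun s hs => (hg s hs.1).mono (Ici_subset_Ici.mpr hs.1)) t ⟨ht, le_rfl⟩
  calc y t = Real.exp (-t) • g t := by simp [g, smul_smul, ← Real.exp_add]
    _ = Real.exp (-t) • y 0 := by simp [hconst, g]

theorem HasFDerivAt.comp_hasDerivWithinAt_newton {E F : Type*} [NormedAddCommGroup E]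
    [NormedSpace ℝ E] [NormedAddCommGroup F] [NormedSpace ℝ F] {f : E → F} {J : E ≃L[ℝ] F}
    {x : ℝ → E} {s : Set ℝ} {t : ℝ} (hf : HasFDerivAt f (J : E →L[ℝ] F) (x t))
    (hx : HasDerivWithinAt x (-J.symm (f (x t))) s t) :
    HasDerivWithinAt (f ∘ x) (-f (x t)) s t := by
  simpa using hf.comp_hasDerivWithinAt t hx

theorem continuous_newton_residual_decay_general
    {n : ℕ}
    (U : Set (EuclideanSpace ℝ (Fin n)))
    (f : EuclideanSpace ℝ (Fin n) → EuclideanSpace ℝ (Fin n))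
    (J : EuclideanSpace ℝ (Fin n) →
      (EuclideanSpace ℝ (Fin n) ≃L[ℝ] EuclideanSpace ℝ (Fin n)))
    (hf : ∀ y ∈ U, HasFDerivAt f
      ((J y : EuclideanSpace ℝ (Fin n) →L[ℝ] EuclideanSpace ℝ (Fin n))) y)
    (x₀ : EuclideanSpace ℝ (Fin n))
    (x : ℝ → EuclideanSpace ℝ (Fin n))
    (hmem : ∀ t : ℝ, 0 ≤ t → x t ∈ U)
    (hode : ∀ t : ℝ, 0 ≤ t →
      HasDerivWithinAt x (-((J (x t)).symm (f (x t)))) (Set.Ici 0) t)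
    (hinit : x 0 = x₀) :
    ∀ t : ℝ, 0 ≤ t → f (x t) = Real.exp (-t) • f x₀ := by
  intro t ht
  rw [← hinit]
  exact eq_exp_neg_smul_of_hasDerivWithinAt_neg
    (fun s hs => (hf _ (hmem s hs)).comp_hasDerivWithinAt_newton (hode s hs)) ht

/-- **Continuous Newton method**: if `x : [0,∞) → U` solves the continuous Newton
equation `x′(t) = -J_f(x(t))⁻¹ f(x(t))` with `x(0) = x₀`, where the Jacobian of `f`
is invertible at every point of `U`, then `f(x(t)) = e^{-t} · f(x₀)` for all `t ≥ 0`. -/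
theorem continuous_newton_residual_decay
    {n : ℕ} (hn : 1 ≤ n)
    (U : Set (EuclideanSpace ℝ (Fin n))) (hUopen : IsOpen U)
    (f : EuclideanSpace ℝ (Fin n) → EuclideanSpace ℝ (Fin n))
    (J : EuclideanSpace ℝ (Fin n) →
      (EuclideanSpace ℝ (Fin n) ≃L[ℝ] EuclideanSpace ℝ (Fin n)))
    (hf : ∀ y ∈ U, HasFDerivAt f
      ((J y : EuclideanSpace ℝ (Fin n) →L[ℝ] EuclideanSpace ℝ (Fin n))) y)
    (hJcont : ContinuousOn
      (fun y => (J y : EuclideanSpace ℝ (Fin n) →L[ℝ] EuclideanSpace ℝ (Fin n))) U)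
    (x₀ : EuclideanSpace ℝ (Fin n)) (hx₀ : x₀ ∈ U)
    (x : ℝ → EuclideanSpace ℝ (Fin n))
    (hmem : ∀ t : ℝ, 0 ≤ t → x t ∈ U)
    (hode : ∀ t : ℝ, 0 ≤ t →
      HasDerivWithinAt x (-((J (x t)).symm (f (x t)))) (Set.Ici 0) t)
    (hinit : x 0 = x₀) :
    ∀ t : ℝ, 0 ≤ t → f (x t) = Real.exp (-t) • f x₀ :=
  continuous_newton_residual_decay_general U f J hf x₀ x hmem hode hinit
end
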